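/- arXiv:2309.05377 — 2 statements merged into one kernel-verified Lean document; each statement's English description precedes it below -/
import Mathlib

section
/- Let n ≥ 2 be even and let s ∈ ℝ^n be a profile in the unit-length model. Let m = o_{n/2}(s) be the (n/2)-th smallest entry of s (the position of the median agent). Then for every c ∈ ℝ, Σ_{i=1}^n min(1, |m − s_i|) ≤ (2 − 2/n) · Σ_{i=1}^n min(1, |c − s_i|); that is, the Median mechanism achieves approximation ratio 2 − 2/n for the social cost. -/
/-!
Let `m` be the median report and `d = min 1 |c - m|`, and say `m ≤ c`. Moving the facility from
`c` to `m` makes no agent at or below `m` worse off, costs each of the at most `n/2` agents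
strictly above `m` at most `d` (triangle inequality for `min 1 |·|`), and saves exactly `d` on the
median agent itself, so `SC(m) ≤ SC(c) + (n/2 - 1) d`. On the other hand the `n/2` agents at or
below `m` each pay at least `d` at `c`, so `(n/2) d ≤ SC(c)`. Together these give
`SC(m) ≤ (2 - 2/n) SC(c)`; the case `c < m` is the mirror image.
-/

/-- The `k`-th ordered statistic (0-indexed) of a profile `s` of left endpoints. -/
noncomputable def oStat {n : ℕ} (s : Fin n → ℝ) (k : Fin n) : ℝ :=
  s (Tuple.sort s k)

open Finset

lemma min_one_abs_sub_le (x y z : ℝ) :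
    min 1 |x - z| ≤ min 1 |x - y| + min 1 |y - z| := by
  have := abs_sub_le x y z
  rcases le_total 1 |x - y| with h₁ | h₁ <;> rcases le_total 1 |y - z| with h₂ | h₂ <;>
    simp only [min_eq_left, min_eq_right, *] <;>
    linarith [min_le_left 1 |x - z|, min_le_right 1 |x - z|, abs_nonneg (x - y),
      abs_nonneg (y - z)]

lemma sum_ite_zero_eq_card_filter_mul {ι : Type*} [Fintype ι] (p : ι → Prop) [DecidablePred p]
    (d : ℝ) : ∑ i, (if p i then d else 0) = #{i | p i} * d := by
  simp [sum_ite]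

section SocialCost

variable {ι : Type*} [Fintype ι]

def socialCost (s : ι → ℝ) (c : ℝ) : ℝ := ∑ i, min 1 |c - s i|

lemma socialCost_neg (s : ι → ℝ) (c : ℝ) : socialCost (-s) (-c) = socialCost s c := by
  simp only [socialCost, Pi.neg_apply, neg_sub_neg, abs_sub_comm]

lemma socialCost_comp_equiv {κ : Type*} [Fintype κ] (s : ι → ℝ) (e : κ ≃ ι) (c : ℝ) :
    socialCost (s ∘ e) c = socialCost s c :=
  e.sum_comp fun i => min 1 |c - s i|

lemma socialCost_add_card_eq_le {s : ι → ℝ} {m c : ℝ} (hmc : m ≤ c) :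
    socialCost s m + #{i | s i = m} * min 1 |c - m| ≤
      socialCost s c + #{i | m < s i} * min 1 |c - m| := by
  rw [socialCost, socialCost, ← sum_ite_zero_eq_card_filter_mul,
    ← sum_ite_zero_eq_card_filter_mul, ← sum_add_distrib, ← sum_add_distrib]
  refine sum_le_sum fun i _ => ?_
  rcases lt_trichotomy (s i) m with hlt | heq | hgt
  · have : |m - s i| ≤ |c - s i| := by
      rw [abs_of_pos (sub_pos.2 hlt), abs_of_pos (by linarith)]
      linarith
    simp only [hlt.ne, hlt.not_gt, if_false]
    linarith [min_le_min_left 1 this]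
  · simp [heq, abs_sub_comm]
  · simp only [hgt.ne', hgt, if_true, if_false, abs_sub_comm c m]
    linarith [min_one_abs_sub_le m c (s i)]

lemma card_le_mul_le_socialCost {s : ι → ℝ} {m c : ℝ} (hmc : m ≤ c) :
    #{i | s i ≤ m} * min 1 |c - m| ≤ socialCost s c := by
  rw [socialCost, ← sum_ite_zero_eq_card_filter_mul]
  refine sum_le_sum fun i _ => ?_
  split_ifs with hle
  · refine min_le_min_left 1 ?_
    rw [abs_of_nonneg (by linarith), abs_of_nonneg (by linarith)]
    linarith
  · exact le_min zero_le_one (abs_nonneg _)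

lemma mul_socialCost_le_of_le {s : ι → ℝ} {j : ι} {c : ℝ} {k : ℕ} (hk : 1 ≤ k)
    (hkn : k ≤ Fintype.card ι) (hgt : #{i | s j < s i} ≤ k) (hjc : s j ≤ c) :
    (Fintype.card ι - k : ℝ) * socialCost s (s j) ≤ (Fintype.card ι - 1) * socialCost s c := by
  set n := Fintype.card ι
  set b := #{i | s j < s i}
  set d := min 1 |c - s j|
  have hd : 0 ≤ d := le_min zero_le_one (abs_nonneg _)
  have hsplit : #{i | s i ≤ s j} + b = n := by
    simpa only [not_le, card_univ] using
      card_filter_add_card_filter_not (s := univ) (fun i => s i ≤ s j)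
  have hupper : socialCost s (s j) ≤ socialCost s c + (b - 1) * d := by
    have hj : (1 : ℝ) ≤ #{i | s i = s j} := by exact_mod_cast card_pos.2 ⟨j, by simp⟩
    nlinarith [socialCost_add_card_eq_le (s := s) hjc]
  have hlower : (n - b) * d ≤ socialCost s c := by
    have := card_le_mul_le_socialCost (s := s) hjc
    rwa [← hsplit, Nat.cast_add, add_sub_cancel_right]
  have hk' : (1 : ℝ) ≤ k := by exact_mod_cast hk
  have hkn' : (k : ℝ) ≤ n := by exact_mod_cast hkn
  have hbk : (b : ℝ) ≤ k := by exact_mod_cast hgt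
  calc (n - k : ℝ) * socialCost s (s j)
      ≤ (n - k) * (socialCost s c + (b - 1) * d) := by gcongr
    _ = (n - k) * socialCost s c + (k - 1) * ((n - b) * d) - (n - 1) * (k - b) * d := by ring
    _ ≤ (n - k) * socialCost s c + (k - 1) * socialCost s c := by
        have := mul_le_mul_of_nonneg_left hlower (sub_nonneg.2 hk')
        have := mul_nonneg (mul_nonneg (by linarith : (0 : ℝ) ≤ n - 1) (sub_nonneg.2 hbk)) hd
        linarith
    _ = (n - 1) * socialCost s c := by ring

lemma mul_socialCost_le {s : ι → ℝ} {j : ι} (c : ℝ) {k : ℕ} (hk : 1 ≤ k)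
    (hkn : k ≤ Fintype.card ι) (hlt : #{i | s i < s j} ≤ k) (hgt : #{i | s j < s i} ≤ k) :
    (Fintype.card ι - k : ℝ) * socialCost s (s j) ≤ (Fintype.card ι - 1) * socialCost s c := by
  rcases le_total (s j) c with hjc | hcj
  · exact mul_socialCost_le_of_le hk hkn hgt hjc
  · have := mul_socialCost_le_of_le (s := -s) (c := -c) hk hkn
      (by simpa only [Pi.neg_apply, neg_lt_neg_iff] using hlt) (neg_le_neg hcj)
    rwa [Pi.neg_apply, socialCost_neg, socialCost_neg] at this

end SocialCost

section Monotone

variable {α : Type*} [Preorder α] [DecidableLT α] {n : ℕ} {t : Fin n → α}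

lemma Monotone.card_filter_lt_apply_le (ht : Monotone t) (k : Fin n) :
    #{j | t j < t k} ≤ k :=
  calc #{j | t j < t k} ≤ #(Iio k) :=
        card_le_card fun _ hj => mem_Iio.2 (ht.reflect_lt (mem_filter.1 hj).2)
    _ = k := Fin.card_Iio k

lemma Monotone.card_filter_apply_lt_le (ht : Monotone t) (k : Fin n) :
    #{j | t k < t j} ≤ n - 1 - k :=
  calc #{j | t k < t j} ≤ #(Ioi k) :=
        card_le_card fun _ hj => mem_Ioi.2 (ht.reflect_lt (mem_filter.1 hj).2)
    _ = n - 1 - k := Fin.card_Ioi k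

end Monotone

/-- The Median mechanism, which places the covering interval at the position of
the median agent (the `(n/2)`-th smallest report, i.e. index `n/2 - 1` zero-indexed),
achieves an approximation ratio of `2 - 2/n` for the social cost in the
unit-length Truthful Interval Covering model. -/
theorem median_mechanism_approx (n : ℕ) (hn : 2 ≤ n) (hev : Even n)
    (s : Fin n → ℝ) (c : ℝ) :
    (∑ i, min 1 |oStat s ⟨n / 2 - 1, by omega⟩ - s i|) ≤
      (2 - 2 / (n : ℝ)) * ∑ i, min 1 |c - s i| := by
  obtain ⟨h, rfl⟩ := hev
  set t := s ∘ Tuple.sort s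
  have ht : Monotone t := Tuple.monotone_sort s
  set med : Fin (h + h) := ⟨(h + h) / 2 - 1, by omega⟩
  have hmed : (med : ℕ) = h - 1 := by simp only [med]; omega
  have hlt : #{j | t j < t med} ≤ h := by have := ht.card_filter_lt_apply_le med; omega
  have hgt : #{j | t med < t j} ≤ h := by have := ht.card_filter_apply_lt_le med; omega
  have key := mul_socialCost_le c (by omega) (by simp) hlt hgt
  rw [socialCost_comp_equiv, socialCost_comp_equiv, Fintype.card_fin, Nat.cast_add,
    add_sub_cancel_right] at key
  change socialCost s (t med) ≤ _ * socialCost s c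
  have hh : (0 : ℝ) < h := by exact_mod_cast (by omega : 0 < h)
  rw [show (2 - 2 / (↑(h + h) : ℝ)) = (↑h + ↑h - 1) / h by push_cast; field_simp; ring,
    div_mul_eq_mul_div, le_div_iff₀ hh, mul_comm]
  exact key
end

section
/- In the variable-length model with n = 2 agents and a covering interval of length 1, let μ be any randomized mechanism mapping each instance I to a Borel probability measure μ(I) on ℝ, and suppose μ is truthful in expectation: for every instance I, every agent i, and every misreported interval, the expected cost of agent i (with respect to her true interval) under μ(I) is at most her expected cost under μ(I'), where I' is the misreported instance. Then for every ε ∈ (0, 1), there exist an instance I and a position c ∈ ℝ such that SC_I(c) > 0 and ∫ SC_I(x) dμ(I)(x) ≥ (1/(4ε)) · SC_I(c); that is, every randomized truthful-in-expectation mechanism has approximation ratio Ω(1/ε). -/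
open MeasureTheory

/-- Cost of an agent with interval `[a, b]` when the unit-length covering interval
is placed at `c`: the uncovered length `(b - a) - |[a, b] ∩ [c, c+1]|`. -/
noncomputable def icost (a b c : ℝ) : ℝ :=
  (b - a) - max 0 (min b (c + 1) - max a c)

/-- Social cost of a two-agent instance `I` (each agent is a pair of endpoints). -/
noncomputable def SC2 (I : Fin 2 → ℝ × ℝ) (c : ℝ) : ℝ :=
  ∑ i, icost (I i).1 (I i).2 c

/-- A randomized mechanism `μ` (mapping instances to Borel probability measures on
covering positions) is truthful in expectation if no agent with a valid true
interval can decrease her expected true cost by reporting any valid interval. -/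
def TruthfulInExpectation2 (μ : (Fin 2 → ℝ × ℝ) → Measure ℝ) : Prop :=
  ∀ (I : Fin 2 → ℝ × ℝ), (∀ i, (I i).1 ≤ (I i).2) →
    ∀ (i : Fin 2) (J : ℝ × ℝ), J.1 ≤ J.2 →
      (∫ x, icost (I i).1 (I i).2 x ∂(μ I)) ≤
        ∫ x, icost (I i).1 (I i).2 x ∂(μ (Function.update I i J))

/-!
Cut `[0, 1]` and `[2, 3]` into `K` cells of length `1/K`. An instance made of one of these unit
intervals and a cell of the other costs only `1/K` at its optimum, so a mechanism with ratio
below `K/2` must give the unit interval expected coverage above `1/2`. Truthfulness ties these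
`2K` instances together. In the instance made of a cell `s ⊆ [0, 1]` and a cell `t ⊆ [2, 3]` no
position covers both, so one agent always loses her whole length `1/K`; since the first agent
may report `[0, 1]` instead of `s` and the second `[2, 3]` instead of `t`, the expected coverage
of `s` in the first deviation plus that of `t` in the second is at most `1/K`. The cells tile
the unit intervals, so summing over the `K²` pairs bounds the total expected coverage of the
unit intervals over all `2K` instances by `K`: one of them has coverage at most `1/2`, hence
ratio at least `K/2`. Take `K = ⌈1/ε⌉`.
-/

open Finset

noncomputable def overlap (a b c : ℝ) : ℝ := max 0 (min b (c + 1) - max a c)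

lemma icost_eq_sub_overlap (a b c : ℝ) : icost a b c = (b - a) - overlap a b c := rfl

lemma overlap_nonneg (a b c : ℝ) : 0 ≤ overlap a b c := le_max_left _ _

lemma overlap_le (a b c : ℝ) : overlap a b c ≤ max 0 (b - a) :=
  max_le_max le_rfl (sub_le_sub (min_le_left _ _) (le_max_left _ _))

lemma overlap_le_sub {a b : ℝ} (h : a ≤ b) (c : ℝ) : overlap a b c ≤ b - a :=
  (overlap_le a b c).trans_eq (max_eq_right (sub_nonneg.2 h))

lemma icost_nonneg {a b : ℝ} (h : a ≤ b) (c : ℝ) : 0 ≤ icost a b c :=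
  sub_nonneg.2 (overlap_le_sub h c)

lemma overlap_eq_zero_of_le {a b c : ℝ} (h : b ≤ c) : overlap a b c = 0 :=
  max_eq_left (by linarith [min_le_left b (c + 1), le_max_right a c])

lemma overlap_eq_zero_of_ge {a b c : ℝ} (h : c + 1 ≤ a) : overlap a b c = 0 :=
  max_eq_left (by linarith [min_le_right b (c + 1), le_max_left a c])

lemma overlap_self (a c : ℝ) : overlap a a c = 0 :=
  le_antisymm (by simpa using overlap_le_sub le_rfl c) (overlap_nonneg a a c)

lemma overlap_add_overlap {a b d : ℝ} (hab : a ≤ b) (hbd : b ≤ d) (c : ℝ) :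
    overlap a b c + overlap b d c = overlap a d c := by
  simp only [overlap, max_def, min_def]
  split_ifs <;> linarith

lemma icost_eq_zero {a b c : ℝ} (hab : a ≤ b) (hca : c ≤ a) (hbc : b ≤ c + 1) :
    icost a b c = 0 := by
  simp [icost, max_eq_left hca, min_eq_left hbc, hab]

lemma icost_eq_sub_of_le {a b c : ℝ} (h : b ≤ c) : icost a b c = b - a := by
  rw [icost_eq_sub_overlap, overlap_eq_zero_of_le h, sub_zero]

lemma icost_eq_sub_of_ge {a b c : ℝ} (h : c + 1 ≤ a) : icost a b c = b - a := by
  rw [icost_eq_sub_overlap, overlap_eq_zero_of_ge h, sub_zero]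

lemma sum_range_overlap {x : ℕ → ℝ} (hx : Monotone x) (n : ℕ) (c : ℝ) :
    ∑ j ∈ range n, overlap (x j) (x (j + 1)) c = overlap (x 0) (x n) c := by
  have step : ∀ j, overlap (x j) (x (j + 1)) c
      = overlap (x 0) (x (j + 1)) c - overlap (x 0) (x j) c := fun j => by
    rw [← overlap_add_overlap (hx (Nat.zero_le j)) (hx j.le_succ)]; ring
  rw [sum_congr rfl fun j _ => step j, sum_range_sub (fun j => overlap (x 0) (x j) c),
    overlap_self, sub_zero]

lemma min_le_icost_add_icost {a b a' b' : ℝ} (hab : a ≤ b) (hab' : a' ≤ b')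
    (hsep : b + 1 ≤ a') (c : ℝ) : min (b - a) (b' - a') ≤ icost a b c + icost a' b' c := by
  rcases le_total (c + 1) a' with h | h
  · rw [icost_eq_sub_of_ge h]; linarith [icost_nonneg hab c, min_le_right (b - a) (b' - a')]
  · rw [icost_eq_sub_of_le (show b ≤ c by linarith)]
    linarith [icost_nonneg hab' c, min_le_left (b - a) (b' - a')]

lemma continuous_overlap (a b : ℝ) : Continuous (overlap a b) := by
  unfold overlap; fun_prop

lemma integrable_overlap (a b : ℝ) (ν : Measure ℝ) [IsFiniteMeasure ν] :
    Integrable (overlap a b) ν := by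
  refine .of_bound (continuous_overlap a b).aestronglyMeasurable (max 0 (b - a)) ?_
  filter_upwards with c
  rw [Real.norm_of_nonneg (overlap_nonneg a b c)]
  exact overlap_le a b c

lemma integrable_icost (a b : ℝ) (ν : Measure ℝ) [IsFiniteMeasure ν] :
    Integrable (icost a b) ν :=
  (integrable_const _).sub (integrable_overlap a b ν)

lemma integral_icost (a b : ℝ) (ν : Measure ℝ) [IsProbabilityMeasure ν] :
    ∫ c, icost a b c ∂ν = (b - a) - ∫ c, overlap a b c ∂ν := by
  simp only [icost_eq_sub_overlap]
  rw [integral_sub (integrable_const _) (integrable_overlap a b ν), integral_const,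
    probReal_univ, one_smul]

lemma integrable_SC2 (I : Fin 2 → ℝ × ℝ) (ν : Measure ℝ) [IsFiniteMeasure ν] :
    Integrable (SC2 I) ν :=
  integrable_finsetSum univ fun i _ => integrable_icost (I i).1 (I i).2 ν

lemma SC2_pair (P Q : ℝ × ℝ) (c : ℝ) :
    SC2 ![P, Q] c = icost P.1 P.2 c + icost Q.1 Q.2 c := by
  simp [SC2, Fin.sum_univ_two]

lemma integral_icost_le_integral_SC2 {I : Fin 2 → ℝ × ℝ} (hI : ∀ i, (I i).1 ≤ (I i).2)
    (i : Fin 2) (ν : Measure ℝ) [IsFiniteMeasure ν] :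
    ∫ c, icost (I i).1 (I i).2 c ∂ν ≤ ∫ c, SC2 I c ∂ν :=
  integral_mono (integrable_icost _ _ ν) (integrable_SC2 I ν) fun c =>
    single_le_sum (fun j _ => icost_nonneg (hI j) c) (mem_univ i)

lemma update_pair_zero {α : Type*} (P Q P' : α) : Function.update ![P, Q] 0 P' = ![P', Q] := by
  ext i; fin_cases i <;> rfl

lemma update_pair_one {α : Type*} (P Q Q' : α) : Function.update ![P, Q] 1 Q' = ![P, Q'] := by
  ext i; fin_cases i <;> rfl

lemma integral_overlap_add_integral_overlap_le {μ : (Fin 2 → ℝ × ℝ) → Measure ℝ}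
    [∀ I, IsProbabilityMeasure (μ I)] (htruth : TruthfulInExpectation2 μ)
    {P Q P' Q' : ℝ × ℝ} (hP : P.1 ≤ P.2) (hQ : Q.1 ≤ Q.2) (hP' : P'.1 ≤ P'.2)
    (hQ' : Q'.1 ≤ Q'.2) (hsep : P.2 + 1 ≤ Q.1) :
    ∫ c, overlap P.1 P.2 c ∂μ ![P', Q] + ∫ c, overlap Q.1 Q.2 c ∂μ ![P, Q'] ≤
      max (P.2 - P.1) (Q.2 - Q.1) := by
  have hPQ : ∀ i, (![P, Q] i).1 ≤ (![P, Q] i).2 := Fin.forall_fin_two.2 ⟨hP, hQ⟩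
  have truth₀ := htruth ![P, Q] hPQ 0 P' hP'
  have truth₁ := htruth ![P, Q] hPQ 1 Q' hQ'
  have hsum : min (P.2 - P.1) (Q.2 - Q.1) ≤
      ∫ c, icost P.1 P.2 c ∂μ ![P, Q] + ∫ c, icost Q.1 Q.2 c ∂μ ![P, Q] := by
    have hint (a b : ℝ) := integrable_icost a b (μ ![P, Q])
    rw [← integral_add (hint _ _) (hint _ _)]
    simpa using integral_mono (integrable_const _) ((hint _ _).add (hint _ _))
      (min_le_icost_add_icost hP hQ hsep)
  simp only [update_pair_zero, update_pair_one, Matrix.cons_val_zero, Matrix.cons_val_one,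
    integral_icost] at truth₀ truth₁ hsum
  linarith [min_add_max (P.2 - P.1) (Q.2 - Q.1)]

noncomputable def cell (t : ℝ) (K j : ℕ) : ℝ × ℝ := (t + j / K, t + (j + 1) / K)

lemma cell_length (t : ℝ) (K j : ℕ) : (cell t K j).2 - (cell t K j).1 = 1 / K := by
  simp only [cell]; ring

lemma cell_fst_le_snd (t : ℝ) (K j : ℕ) : (cell t K j).1 ≤ (cell t K j).2 := by
  have := cell_length t K j
  have : (0 : ℝ) ≤ 1 / K := by positivity
  linarith

lemma le_cell_fst (t : ℝ) (K j : ℕ) : t ≤ (cell t K j).1 := by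
  simp only [cell]; have : (0 : ℝ) ≤ j / K := by positivity
  linarith

lemma cell_snd_le {K j : ℕ} (t : ℝ) (hj : j < K) : (cell t K j).2 ≤ t + 1 := by
  have : ((j : ℝ) + 1) / K ≤ 1 := div_le_one_of_le₀ (by exact_mod_cast hj) (Nat.cast_nonneg K)
  simp only [cell]; linarith

lemma sum_range_overlap_cell {K : ℕ} (hK : K ≠ 0) (t c : ℝ) :
    ∑ j ∈ range K, overlap (cell t K j).1 (cell t K j).2 c = overlap t (t + 1) c := by
  have hx : Monotone fun j : ℕ => t + j / K := fun i j hij => by simp only; gcongr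
  convert sum_range_overlap hx K c using 1
  · simp [cell]
  · simp [hK]

lemma integral_overlap_eq_sum_cell (ν : Measure ℝ) [IsFiniteMeasure ν] {K : ℕ} (hK : K ≠ 0)
    (t : ℝ) : ∫ c, overlap t (t + 1) c ∂ν =
      ∑ j ∈ range K, ∫ c, overlap (cell t K j).1 (cell t K j).2 c ∂ν := by
  rw [← integral_finsetSum _ fun j _ => integrable_overlap _ _ ν]
  simp only [sum_range_overlap_cell hK]

theorem sum_integral_overlap_unit_le {μ : (Fin 2 → ℝ × ℝ) → Measure ℝ}
    [∀ I, IsProbabilityMeasure (μ I)] (htruth : TruthfulInExpectation2 μ) {K : ℕ}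
    (hK : K ≠ 0) :
    ∑ i ∈ range K, ∫ c, overlap 0 1 c ∂μ ![(0, 1), cell 2 K i] +
      ∑ j ∈ range K, ∫ c, overlap 2 3 c ∂μ ![cell 0 K j, (2, 3)] ≤ K := by
  have rows (i : ℕ) := integral_overlap_eq_sum_cell (μ ![(0, 1), cell 2 K i]) hK 0
  have cols (j : ℕ) := integral_overlap_eq_sum_cell (μ ![cell 0 K j, (2, 3)]) hK 2
  norm_num at rows cols
  calc _ = ∑ i ∈ range K, ∑ j ∈ range K,
        (∫ c, overlap (cell 0 K j).1 (cell 0 K j).2 c ∂μ ![(0, 1), cell 2 K i] +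
          ∫ c, overlap (cell 2 K i).1 (cell 2 K i).2 c ∂μ ![cell 0 K j, (2, 3)]) := by
        simp only [rows, cols, sum_add_distrib]
        exact congrArg _ sum_comm
    _ ≤ ∑ i ∈ range K, ∑ j ∈ range K, (1 / K : ℝ) := by
      gcongr with i _ j hj
      have hsep : (cell 0 K j).2 + 1 ≤ (cell 2 K i).1 := by
        linarith [cell_snd_le 0 (mem_range.1 hj), le_cell_fst 2 K i]
      simpa only [cell_length, max_self] using
        integral_overlap_add_integral_overlap_le htruth (cell_fst_le_snd _ _ _)
          (cell_fst_le_snd _ _ _) (by norm_num : ((0 : ℝ), (1 : ℝ)).1 ≤ (0, 1).2)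
          (by norm_num : ((2 : ℝ), (3 : ℝ)).1 ≤ (2, 3).2) hsep
    _ = K := by
      simp only [sum_const, card_range, nsmul_eq_mul]
      field_simp

lemma half_le_integral_SC2 {I : Fin 2 → ℝ × ℝ} (hI : ∀ i, (I i).1 ≤ (I i).2) (i : Fin 2)
    (hlen : (I i).2 - (I i).1 = 1) (ν : Measure ℝ) [IsProbabilityMeasure ν]
    (hcov : ∫ c, overlap (I i).1 (I i).2 c ∂ν ≤ 1 / 2) : 1 / 2 ≤ ∫ c, SC2 I c ∂ν := by
  have := integral_icost_le_integral_SC2 hI i ν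
  rw [integral_icost, hlen] at this
  linarith

theorem exists_SC2_eq_one_div_and_half_le_integral {μ : (Fin 2 → ℝ × ℝ) → Measure ℝ}
    [∀ I, IsProbabilityMeasure (μ I)] (htruth : TruthfulInExpectation2 μ) {K : ℕ}
    (hK : K ≠ 0) :
    ∃ I : Fin 2 → ℝ × ℝ, (∀ i, (I i).1 ≤ (I i).2) ∧
      ∃ c, SC2 I c = 1 / K ∧ 1 / 2 ≤ ∫ x, SC2 I x ∂μ I := by
  have hne : (range K).Nonempty := nonempty_range_iff.2 hK
  have total := sum_integral_overlap_unit_le htruth hK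
  have half : ∑ _i ∈ range K, (1 / 2 : ℝ) = K / 2 := by
    rw [sum_const, card_range, nsmul_eq_mul]; ring
  by_cases hrow : ∑ i ∈ range K, ∫ c, overlap 0 1 c ∂μ ![(0, 1), cell 2 K i] ≤
      ∑ _i ∈ range K, (1 / 2 : ℝ)
  · obtain ⟨i, -, hi⟩ := exists_le_of_sum_le hne hrow
    refine ⟨![(0, 1), cell 2 K i], ?valid, 0, ?_,
      half_le_integral_SC2 ?valid 0 (by norm_num) _ hi⟩
    case valid => exact Fin.forall_fin_two.2 ⟨by norm_num, cell_fst_le_snd _ _ _⟩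
    rw [SC2_pair, icost_eq_zero (by norm_num) le_rfl (by norm_num),
      icost_eq_sub_of_ge (by linarith [le_cell_fst 2 K i]), cell_length, zero_add]
  · obtain ⟨j, hj, hj'⟩ := exists_le_of_sum_le hne
      (g := fun _ => (1 / 2 : ℝ)) (by linarith : ∑ j ∈ range K,
        ∫ c, overlap 2 3 c ∂μ ![cell 0 K j, (2, 3)] ≤ ∑ _j ∈ range K, (1 / 2 : ℝ))
    refine ⟨![cell 0 K j, (2, 3)], ?valid, 2, ?_,
      half_le_integral_SC2 ?valid 1 (by norm_num) _ hj'⟩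
    case valid => exact Fin.forall_fin_two.2 ⟨cell_fst_le_snd _ _ _, by norm_num⟩
    rw [SC2_pair, icost_eq_zero (by norm_num) le_rfl (by norm_num),
      icost_eq_sub_of_le (by linarith [cell_snd_le 0 (mem_range.1 hj)]), cell_length, add_zero]

theorem unknown_lengths_randomized_lower_bound_general
    (μ : (Fin 2 → ℝ × ℝ) → Measure ℝ)
    (hprob : ∀ I, IsProbabilityMeasure (μ I))
    (htruth : TruthfulInExpectation2 μ)
    (ε : ℝ) (hε0 : 0 < ε) :
    ∃ I : Fin 2 → ℝ × ℝ, (∀ i, (I i).1 ≤ (I i).2) ∧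
      ∃ c : ℝ, 0 < SC2 I c ∧
        (1 / (4 * ε)) * SC2 I c ≤ ∫ x, SC2 I x ∂(μ I) := by
  have hK : ⌈1 / ε⌉₊ ≠ 0 := (Nat.ceil_pos.2 (by positivity)).ne'
  obtain ⟨I, hI, c, hc, hhalf⟩ := exists_SC2_eq_one_div_and_half_le_integral htruth hK
  refine ⟨I, hI, c, by rw [hc]; positivity, le_trans ?_ hhalf⟩
  have hεK : 1 ≤ ε * ⌈1 / ε⌉₊ := by
    have := Nat.le_ceil (1 / ε)
    rwa [div_le_iff₀' hε0] at this
  rw [hc, div_mul_div_comm, div_le_div_iff₀ (by positivity) two_pos]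
  linarith

/-- When interval lengths are unknown, every randomized truthful-in-expectation
mechanism for two agents with a unit covering interval has approximation ratio at
least `1/(4ε)` for every `ε ∈ (0, 1)`, hence ratio `Ω(1/ε)`. -/
theorem unknown_lengths_randomized_lower_bound
    (μ : (Fin 2 → ℝ × ℝ) → Measure ℝ)
    (hprob : ∀ I, IsProbabilityMeasure (μ I))
    (htruth : TruthfulInExpectation2 μ)
    (ε : ℝ) (hε0 : 0 < ε) (hε1 : ε < 1) :
    ∃ I : Fin 2 → ℝ × ℝ, (∀ i, (I i).1 ≤ (I i).2) ∧
      ∃ c : ℝ, 0 < SC2 I c ∧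
        (1 / (4 * ε)) * SC2 I c ≤ ∫ x, SC2 I x ∂(μ I) :=
  unknown_lengths_randomized_lower_bound_general μ hprob htruth ε hε0
end
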